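/- arXiv:2301.11048 — 5 statements merged into one kernel-verified Lean document; each statement's English description precedes it below -/
import Mathlib

section
/- Let B be a finite antichain of finite equivalence relations under the embedding order, and let C = Av(B) be the set of all finite equivalence relations not embedding any element of B. Then C is atomic (satisfies the joint embedding property) if and only if every element of B is uniform, i.e., all of its equivalence classes have the same size. -/
/-- A finite equivalence relation. -/
def EqRel : Type := (n : ℕ) × Setoid (Fin n)

/-- The (non-consecutive) embedding order on finite equivalence relations. -/
def EmbedLE (a b : EqRel) : Prop :=
  ∃ f : Fin a.1 → Fin b.1, Function.Injective f ∧
    ∀ x y, a.2.r x y ↔ b.2.r (f x) (f y)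

/-- The avoidance set of `B`: all finite equivalence relations embedding no
element of `B`. -/
def Av (B : Set EqRel) : Set EqRel := {τ | ∀ β ∈ B, ¬ EmbedLE β τ}

/-- An equivalence relation is uniform if all its classes have the same size. -/
def Uniform (a : EqRel) : Prop :=
  ∀ c₁ ∈ a.2.classes, ∀ c₂ ∈ a.2.classes, c₁.ncard = c₂.ncard

/-!
Up to isomorphism a finite equivalence relation is its family of class sizes, and `a` embeds in `b`
iff the classes of `a` can be sent injectively to classes of `b` that are at least as large.

If some `β ∈ B` is not uniform, let `σ` be `β` without one of its smallest classes, and `ρ`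
consist of as many classes as `β` has, all of that smallest size. Both lie strictly below `β`,
hence in `Av B` since `B` is an antichain, but every `θ` above both contains `β`.

If every element of `B` is uniform: a uniform `β` with `k` classes of size `m` embeds in `θ` iff `θ`
has `k` classes of size at least `m`. Sorting the class sizes of `σ` and `ρ` decreasingly and taking
their pointwise maximum gives a `θ` above both whose number of classes of size at least `m` is the
larger of those of `σ` and `ρ`, so `θ` avoids `B` whenever `σ` and `ρ` do.
-/

open Function

def Dominated {ι κ : Type*} (s : ι → ℕ) (t : κ → ℕ) : Prop :=
  ∃ g : ι → κ, Injective g ∧ ∀ i, s i ≤ t (g i)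

theorem exists_injective_of_natCard_le {α β : Type*} [Finite α] [Finite β]
    (h : Nat.card α ≤ Nat.card β) : ∃ f : α → β, Injective f :=
  ⟨(Finite.equivFin β).symm ∘ Fin.castLE h ∘ Finite.equivFin α,
    (Finite.equivFin β).symm.injective.comp
      ((Fin.castLE_injective h).comp (Finite.equivFin α).injective)⟩

namespace Dominated

variable {ι κ : Type*} {s : ι → ℕ} {t : κ → ℕ}

theorem mono {t' : κ → ℕ} (h : Dominated s t) (htt' : ∀ j, t j ≤ t' j) : Dominated s t' :=
  let ⟨g, hg, hgs⟩ := h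
  ⟨g, hg, fun i => (hgs i).trans (htt' _)⟩

theorem const_iff [Finite ι] [Finite κ] {m : ℕ} :
    Dominated (fun _ : ι => m) t ↔ Nat.card ι ≤ {j | m ≤ t j}.ncard := by
  rw [← Nat.card_coe_set_eq]
  constructor
  · rintro ⟨g, hg, hgm⟩
    exact Nat.card_le_card_of_injective (fun i => ⟨g i, hgm i⟩)
      fun i i' h => hg (congrArg Subtype.val h)
  · intro h
    obtain ⟨g, hg⟩ := exists_injective_of_natCard_le h
    exact ⟨fun i => g i, Subtype.val_injective.comp hg, fun i => (g i).2⟩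

theorem of_restrict_ne [Finite ι] [DecidableEq ι] {i₀ : ι}
    (hne : Dominated (fun i : {i // i ≠ i₀} => s i) t)
    (hconst : Dominated (fun _ : ι => s i₀) t) : Dominated s t := by
  obtain ⟨g, hg, hgs⟩ := hne
  obtain ⟨g₀, hg₀, hg₀s⟩ := hconst
  -- `g₀` takes more values than `g`, so one of them is free for `i₀`.
  obtain ⟨j, hj⟩ : ∃ j, g₀ j ∉ Set.range g := by
    by_contra! h
    choose φ hφ using h
    have hφ_inj : Injective φ := fun j j' e => hg₀ (by rw [← hφ j, ← hφ j', e])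
    obtain ⟨j', hj'⟩ := Finite.surjective_of_injective (Subtype.val_injective.comp hφ_inj) i₀
    exact (φ j').2 hj'
  let G := Embedding.optionElim ⟨g, hg⟩ (g₀ j) hj
  refine ⟨G ∘ (Equiv.optionSubtypeNe i₀).symm, G.injective.comp (Equiv.injective _), fun i => ?_⟩
  by_cases hi : i = i₀
  · subst hi
    simpa [G, Equiv.optionSubtypeNe_symm_self] using hg₀s j
  · simpa [G, Equiv.optionSubtypeNe_symm_of_ne hi] using hgs ⟨i, hi⟩

end Dominated

noncomputable def fiberCard {α ι : Type*} (f : α → ι) (i : ι) : ℕ := Nat.card {x // f x = i}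

section Fibers

variable {α β ι κ : Type*} {f : α → ι} {g : β → κ}

theorem dominated_fiberCard_of_injective [Finite β] (hf : Surjective f) {φ : α → β}
    (hφ : Injective φ) (hrel : ∀ x y, f x = f y ↔ g (φ x) = g (φ y)) :
    Dominated (fiberCard f) (fiberCard g) := by
  choose r hr using hf
  refine ⟨fun i => g (φ (r i)), fun i i' h => ?_, fun i => ?_⟩
  · rw [← hr i, ← hr i']
    exact (hrel _ _).mpr h
  · refine Nat.card_le_card_of_injective
      (fun x => ⟨φ x, (hrel x (r i)).mp (x.2.trans (hr i).symm)⟩) fun x y hxy => ?_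
    exact Subtype.ext (hφ (congrArg Subtype.val hxy))

theorem exists_injective_of_dominated_fiberCard [Finite α] [Finite β]
    (h : Dominated (fiberCard f) (fiberCard g)) :
    ∃ φ : α → β, Injective φ ∧ ∀ x y, f x = f y ↔ g (φ x) = g (φ y) := by
  obtain ⟨G, hG, hcard⟩ := h
  choose ψ hψ using fun i => exists_injective_of_natCard_le (hcard i)
  let φ := Equiv.sigmaFiberEquiv g ∘ Sigma.map G ψ ∘ (Equiv.sigmaFiberEquiv f).symm
  have hgφ : ∀ x, g (φ x) = G (f x) := fun x => (ψ (f x) ⟨x, rfl⟩).2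
  refine ⟨φ, (Equiv.injective _).comp ((hG.sigma_map hψ).comp (Equiv.injective _)), fun x y => ?_⟩
  rw [hgφ, hgφ, hG.eq_iff]

end Fibers

theorem ncard_le_max_of_antitone {α : Type*} [LinearOrder α] [Finite α] {u v : α → ℕ}
    (hu : Antitone u) (hv : Antitone v) (m : ℕ) :
    {i | m ≤ max (u i) (v i)}.ncard ≤ max {i | m ≤ u i}.ncard {i | m ≤ v i}.ncard := by
  have hunion : {i | m ≤ max (u i) (v i)} = {i | m ≤ u i} ∪ {i | m ≤ v i} := by
    ext; simp
  have hlower : ∀ {w : α → ℕ}, Antitone w → IsLowerSet {i | m ≤ w i} :=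
    fun hw _ _ hji hi => le_trans hi (hw hji)
  rw [hunion]
  rcases (hlower hu).total (hlower hv) with h | h
  · rw [Set.union_eq_right.mpr h]
    exact le_max_right _ _
  · rw [Set.union_eq_left.mpr h]
    exact le_max_left _ _

section SortedSizes

variable {ι : Type*} [Finite ι] (s : ι → ℕ)

noncomputable def sortedEnum : Fin (Nat.card ι) ≃ ι :=
  (Tuple.sort (OrderDual.toDual ∘ s ∘ (Finite.equivFin ι).symm)).trans (Finite.equivFin ι).symm

theorem antitone_comp_sortedEnum : Antitone (s ∘ sortedEnum s) :=
  monotone_toDual_comp_iff.mp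
    (Tuple.monotone_sort (OrderDual.toDual ∘ s ∘ (Finite.equivFin ι).symm))

noncomputable def sortedSizes (i : ℕ) : ℕ :=
  if h : i < Nat.card ι then s (sortedEnum s ⟨i, h⟩) else 0

theorem sortedSizes_of_lt {i : ℕ} (h : i < Nat.card ι) :
    sortedSizes s i = s (sortedEnum s ⟨i, h⟩) :=
  dif_pos h

theorem antitone_sortedSizes : Antitone (sortedSizes s) := by
  intro i j hij
  by_cases hj : j < Nat.card ι
  · rw [sortedSizes_of_lt s hj, sortedSizes_of_lt s (hij.trans_lt hj)]
    exact antitone_comp_sortedEnum s (show (⟨i, _⟩ : Fin _) ≤ ⟨j, hj⟩ from hij)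
  · rw [sortedSizes, dif_neg hj]
    exact Nat.zero_le _

theorem dominated_sortedSizes {N : ℕ} (hN : Nat.card ι ≤ N) :
    Dominated s fun i : Fin N => sortedSizes s i := by
  refine ⟨fun x => Fin.castLE hN ((sortedEnum s).symm x),
    (Fin.castLE_injective hN).comp (Equiv.injective _), fun x => ?_⟩
  simp [sortedSizes_of_lt s ((sortedEnum s).symm x).2]

theorem ncard_sortedSizes_le {m : ℕ} (hm : 0 < m) (N : ℕ) :
    {i : Fin N | m ≤ sortedSizes s i}.ncard ≤ {x | m ≤ s x}.ncard := by
  have hlt : ∀ i : Fin N, m ≤ sortedSizes s i → (i : ℕ) < Nat.card ι := fun i hi => by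
    by_contra h
    rw [sortedSizes, dif_neg h] at hi
    omega
  rw [← Nat.card_coe_set_eq, ← Nat.card_coe_set_eq]
  refine Nat.card_le_card_of_injective
    (fun i => ⟨sortedEnum s ⟨i, hlt i i.2⟩, (sortedSizes_of_lt s _).symm.trans_ge i.2⟩) ?_
  intro i j hij
  exact Subtype.ext (Fin.ext
    (Fin.mk.inj_iff.mp ((sortedEnum s).injective (congrArg Subtype.val hij))))

end SortedSizes

theorem exists_dominated_join {ι κ : Type*} [Finite ι] [Finite κ] (s : ι → ℕ) (t : κ → ℕ) :
    ∃ (N : ℕ) (w : Fin N → ℕ), Dominated s w ∧ Dominated t w ∧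
      ∀ m, 0 < m → {i | m ≤ w i}.ncard ≤ max {x | m ≤ s x}.ncard {y | m ≤ t y}.ncard := by
  refine ⟨max (Nat.card ι) (Nat.card κ), fun i => max (sortedSizes s i) (sortedSizes t i),
    (dominated_sortedSizes s (le_max_left _ _)).mono fun _ => le_max_left _ _,
    (dominated_sortedSizes t (le_max_right _ _)).mono fun _ => le_max_right _ _, fun m hm => ?_⟩
  have hval : Monotone (Fin.val : Fin (max (Nat.card ι) (Nat.card κ)) → ℕ) :=
    Fin.val_strictMono.monotone
  exact (ncard_le_max_of_antitone ((antitone_sortedSizes s).comp_monotone hval)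
    ((antitone_sortedSizes t).comp_monotone hval) m).trans
    (max_le_max (ncard_sortedSizes_le s hm _) (ncard_sortedSizes_le t hm _))

theorem EmbedLE.trans {a b c : EqRel} (hab : EmbedLE a b) (hbc : EmbedLE b c) : EmbedLE a c :=
  let ⟨f, hf, hfr⟩ := hab
  let ⟨g, hg, hgr⟩ := hbc
  ⟨g ∘ f, hg.comp hf, fun x y => (hfr x y).trans (hgr (f x) (f y))⟩

namespace EqRel

noncomputable def classSize (a : EqRel) : Quotient a.2 → ℕ := fiberCard (Quotient.mk a.2)

theorem classSize_pos (a : EqRel) (q : Quotient a.2) : 0 < a.classSize q :=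
  q.inductionOn fun x => Nat.card_pos_iff.mpr ⟨⟨⟨x, rfl⟩⟩, inferInstance⟩

theorem ncard_setOf_rel (a : EqRel) (y : Fin a.1) :
    {x | a.2 x y}.ncard = a.classSize (Quotient.mk a.2 y) := by
  rw [← Nat.card_coe_set_eq]
  exact Nat.card_congr (Equiv.subtypeEquivRight fun _ => Quotient.eq.symm)

theorem uniform_iff {a : EqRel} : Uniform a ↔ ∀ q q', a.classSize q = a.classSize q' := by
  simp only [Uniform, Setoid.classes, Set.mem_ofPred_eq, forall_exists_index,
    forall_eq_apply_imp_iff, ncard_setOf_rel]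
  exact ⟨fun h q q' => q.inductionOn₂ q' h, fun h _ _ => h _ _⟩

theorem exists_classSize_eq_of_uniform {a : EqRel} (ha : Uniform a) :
    ∃ m, 0 < m ∧ a.classSize = fun _ => m := by
  by_cases h : Nonempty (Quotient a.2)
  · obtain ⟨q⟩ := h
    exact ⟨a.classSize q, a.classSize_pos q, funext fun q' => uniform_iff.mp ha q' q⟩
  · exact ⟨1, one_pos, funext fun q => (h ⟨q⟩).elim⟩

theorem embedLE_iff_of_rel_iff {a b : EqRel} {ι κ : Type*} {f : Fin a.1 → ι} {g : Fin b.1 → κ}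
    (hf : ∀ x y, a.2 x y ↔ f x = f y) (hg : ∀ x y, b.2 x y ↔ g x = g y) :
    EmbedLE a b ↔ ∃ φ : Fin a.1 → Fin b.1, Injective φ ∧ ∀ x y, f x = f y ↔ g (φ x) = g (φ y) := by
  simp only [EmbedLE, hf, hg]

theorem embedLE_iff {a b : EqRel} : EmbedLE a b ↔ Dominated a.classSize b.classSize := by
  rw [embedLE_iff_of_rel_iff (fun _ _ => Quotient.eq.symm) (fun _ _ => Quotient.eq.symm)]
  exact ⟨fun ⟨_, hφ, hrel⟩ => dominated_fiberCard_of_injective Quotient.mk_surjective hφ hrel,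
    exists_injective_of_dominated_fiberCard⟩

section OfSizes

variable {ι : Type*} [Finite ι] (s : ι → ℕ)

noncomputable def sizesLabel : Fin (Nat.card (Σ i, Fin (s i))) → ι :=
  fun x => ((Finite.equivFin _).symm x).1

-- One class of size `s i` for each `i` with `0 < s i`.
noncomputable def ofSizes : EqRel :=
  ⟨Nat.card (Σ i, Fin (s i)), Setoid.ker (sizesLabel s)⟩

theorem fiberCard_sizesLabel : fiberCard (sizesLabel s) = s := by
  funext i
  exact (Nat.card_congr (((Finite.equivFin _).symm.subtypeEquiv fun _ => Iff.rfl).trans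
    (Equiv.sigmaSubtype i))).trans (Nat.card_fin _)

theorem surjective_sizesLabel (hs : ∀ i, 0 < s i) : Surjective (sizesLabel s) :=
  fun i => ⟨Finite.equivFin _ ⟨i, ⟨0, hs i⟩⟩, by simp [sizesLabel]⟩

variable {s}

theorem embedLE_ofSizes_iff (hs : ∀ i, 0 < s i) {a : EqRel} :
    EmbedLE (ofSizes s) a ↔ Dominated s a.classSize := by
  rw [embedLE_iff_of_rel_iff (fun _ _ => Setoid.ker_def) (fun _ _ => Quotient.eq.symm)]
  conv_rhs => rw [← fiberCard_sizesLabel s]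
  exact ⟨fun ⟨_, hφ, hrel⟩ => dominated_fiberCard_of_injective (surjective_sizesLabel s hs) hφ hrel,
    exists_injective_of_dominated_fiberCard⟩

theorem embedLE_ofSizes_iff' {a : EqRel} : EmbedLE a (ofSizes s) ↔ Dominated a.classSize s := by
  rw [embedLE_iff_of_rel_iff (fun _ _ => Quotient.eq.symm) (fun _ _ => Setoid.ker_def)]
  conv_rhs => rw [← fiberCard_sizesLabel s]
  exact ⟨fun ⟨_, hφ, hrel⟩ => dominated_fiberCard_of_injective Quotient.mk_surjective hφ hrel,
    exists_injective_of_dominated_fiberCard⟩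

end OfSizes

theorem exists_embedLE_pair_of_not_uniform {β : EqRel} (hβ : ¬ Uniform β) :
    ∃ σ ρ : EqRel, EmbedLE σ β ∧ ¬ EmbedLE β σ ∧ EmbedLE ρ β ∧ ¬ EmbedLE β ρ ∧
      ∀ θ, EmbedLE σ θ → EmbedLE ρ θ → EmbedLE β θ := by
  classical
  obtain ⟨q₁, q₂, hne⟩ : ∃ q₁ q₂, β.classSize q₁ ≠ β.classSize q₂ := by
    simpa [uniform_iff] using hβ
  have : Nonempty (Quotient β.2) := ⟨q₁⟩
  obtain ⟨q₀, hq₀⟩ := Finite.exists_min β.classSize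
  obtain ⟨q, hq⟩ : ∃ q, β.classSize q₀ < β.classSize q := by
    by_contra! h
    exact hne (((h q₁).antisymm (hq₀ q₁)).trans ((h q₂).antisymm (hq₀ q₂)).symm)
  -- `σ` drops a smallest class of `β`; `ρ` has as many classes as `β`, all of the smallest size.
  refine ⟨ofSizes fun q : {q // q ≠ q₀} => β.classSize q,
    ofSizes fun _ : Quotient β.2 => β.classSize q₀, ?_, ?_, ?_, ?_, fun θ hσθ hρθ => ?_⟩
  · exact (embedLE_ofSizes_iff fun _ => β.classSize_pos _).mpr
      ⟨Subtype.val, Subtype.val_injective, fun _ => le_rfl⟩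
  · intro hβσ
    obtain ⟨g, hg, -⟩ := embedLE_ofSizes_iff'.mp hβσ
    obtain ⟨q', hq'⟩ := Finite.surjective_of_injective (Subtype.val_injective.comp hg) q₀
    exact (g q').2 hq'
  · exact (embedLE_ofSizes_iff fun _ => β.classSize_pos _).mpr ⟨id, injective_id, hq₀⟩
  · intro hβρ
    obtain ⟨g, -, hg⟩ := embedLE_ofSizes_iff'.mp hβρ
    exact (hg q).not_gt hq
  · rw [embedLE_ofSizes_iff fun _ => β.classSize_pos _] at hσθ hρθ
    exact embedLE_iff.mpr (hσθ.of_restrict_ne hρθ)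

theorem mem_av_of_embedLE {B : Set EqRel} (hanti : ∀ β₁ ∈ B, ∀ β₂ ∈ B, β₁ ≠ β₂ → ¬ EmbedLE β₁ β₂)
    {β σ : EqRel} (hβ : β ∈ B) (hσβ : EmbedLE σ β) (hβσ : ¬ EmbedLE β σ) : σ ∈ Av B :=
  fun β' hβ' hβ'σ => by
    by_cases h : β' = β
    · exact hβσ (h ▸ hβ'σ)
    · exact hanti β' hβ' β hβ h (hβ'σ.trans hσβ)

theorem exists_join (σ ρ : EqRel) : ∃ θ, EmbedLE σ θ ∧ EmbedLE ρ θ ∧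
    ∀ β, Uniform β → EmbedLE β θ → EmbedLE β σ ∨ EmbedLE β ρ := by
  obtain ⟨N, w, hσ, hρ, hcard⟩ := exists_dominated_join σ.classSize ρ.classSize
  refine ⟨ofSizes w, embedLE_ofSizes_iff'.mpr hσ, embedLE_ofSizes_iff'.mpr hρ, fun β hβ hβθ => ?_⟩
  obtain ⟨m, hm, hβm⟩ := exists_classSize_eq_of_uniform hβ
  rw [embedLE_ofSizes_iff', hβm, Dominated.const_iff] at hβθ
  rw [embedLE_iff, embedLE_iff, hβm, Dominated.const_iff, Dominated.const_iff]
  exact le_max_iff.mp (hβθ.trans (hcard m hm))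

end EqRel

theorem av_atomic_iff_uniform_general (B : Set EqRel)
    (hanti : ∀ β₁ ∈ B, ∀ β₂ ∈ B, β₁ ≠ β₂ → ¬ EmbedLE β₁ β₂) :
    (∀ σ ∈ Av B, ∀ ρ ∈ Av B, ∃ θ ∈ Av B, EmbedLE σ θ ∧ EmbedLE ρ θ) ↔
      ∀ β ∈ B, Uniform β := by
  constructor
  · intro hjoint β hβ
    by_contra hβu
    obtain ⟨σ, ρ, hσβ, hβσ, hρβ, hβρ, hjoin⟩ := EqRel.exists_embedLE_pair_of_not_uniform hβu
    obtain ⟨θ, hθ, hσθ, hρθ⟩ := hjoint σ (EqRel.mem_av_of_embedLE hanti hβ hσβ hβσ)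
      ρ (EqRel.mem_av_of_embedLE hanti hβ hρβ hβρ)
    exact hθ β hβ (hjoin θ hσθ hρθ)
  · intro hunif σ hσ ρ hρ
    obtain ⟨θ, hσθ, hρθ, hθ⟩ := EqRel.exists_join σ ρ
    refine ⟨θ, fun β hβ hβθ => ?_, hσθ, hρθ⟩
    rcases hθ β (hunif β hβ) hβθ with h | h
    exacts [hσ β hβ h, hρ β hβ h]

/-- For a finite antichain (basis) `B`, the avoidance set `Av B` is atomic (has the
joint embedding property) iff every element of `B` is uniform. -/
theorem av_atomic_iff_uniform (B : Set EqRel) (hfin : B.Finite)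
    (hanti : ∀ β₁ ∈ B, ∀ β₂ ∈ B, β₁ ≠ β₂ → ¬ EmbedLE β₁ β₂) :
    (∀ σ ∈ Av B, ∀ ρ ∈ Av B, ∃ θ ∈ Av B, EmbedLE σ θ ∧ EmbedLE ρ θ) ↔
      ∀ β ∈ B, Uniform β :=
  av_atomic_iff_uniform_general B hanti
end

section
/- The family of finite equivalence relations on linearly ordered sets {σ_n : n ≥ 3}, where σ_n is the equivalence relation on {1,...,n} whose classes are {1,n} and the singletons {2},...,{n-1}, forms an infinite antichain under the consecutive embedding order. Hence the poset of finite linearly ordered equivalence relations under consecutive embedding is not well quasi-ordered. -/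
/-- The consecutive embedding order: `a ≤cons b` iff the points of `a` map to an
interval of consecutive points of `b`, preserving and reflecting the relation. -/
def ConsLE (a b : EqRel) : Prop :=
  ∃ k, k + a.1 ≤ b.1 ∧
    ∀ (x y : Fin a.1) (hx : k + x.1 < b.1) (hy : k + y.1 < b.1),
      (a.2.r x y ↔ b.2.r ⟨k + x.1, hx⟩ ⟨k + y.1, hy⟩)

/-- `sigmaRel n` is the equivalence relation on `{0,...,n-1}` whose classes are
`{0, n-1}` together with the singletons `{1},...,{n-2}`. -/
def sigmaRel (n : ℕ) : Setoid (Fin n) where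
  r a b := a = b ∨ (a.1 = 0 ∧ b.1 + 1 = n) ∨ (b.1 = 0 ∧ a.1 + 1 = n)
  iseqv := by
    constructor
    · intro a; left; rfl
    · intro a b h; tauto
    · intro a b c hab hbc
      have ha := a.isLt; have hb := b.isLt; have hc := c.isLt
      rcases hab with rfl | ⟨h1, h2⟩ | ⟨h1, h2⟩ <;>
        rcases hbc with rfl | ⟨h3, h4⟩ | ⟨h3, h4⟩ <;>
        first
          | (left; rfl)
          | (left; exact Fin.ext (by omega))
          | (right; left; exact ⟨by omega, by omega⟩)
          | (right; right; exact ⟨by omega, by omega⟩)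

/-!
A consecutive embedding of `sigmaRel m` into `sigmaRel n` sends the related endpoints `0` and
`m - 1` to the distinct points `k` and `k + m - 1`. The only related pair of distinct points of
`sigmaRel n` is `0, n - 1`, so `k = 0` and `m = n`.
-/

lemma sigmaRel_r_zero_last {m : ℕ} (hm : 0 < m) :
    (sigmaRel m).r ⟨0, hm⟩ ⟨m - 1, Nat.sub_lt hm one_pos⟩ :=
  Or.inr (Or.inl ⟨rfl, by simp only; omega⟩)

lemma eq_zero_and_succ_eq_of_sigmaRel_r {n : ℕ} {a b : Fin n} (hab : a.1 < b.1)
    (h : (sigmaRel n).r a b) : a.1 = 0 ∧ b.1 + 1 = n := by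
  rcases h with rfl | h | ⟨-, h⟩
  · exact (lt_irrefl _ hab).elim
  · exact h
  · omega

theorem not_consLE_sigmaRel {m n : ℕ} (hm : 2 ≤ m) (hmn : m ≠ n) :
    ¬ ConsLE ⟨m, sigmaRel m⟩ ⟨n, sigmaRel n⟩ := by
  rintro ⟨k, hk, hrel⟩
  dsimp only at hk hrel
  have hm0 : 0 < m := by omega
  have himage := (hrel _ _ (by omega) (by omega)).mp (sigmaRel_r_zero_last hm0)
  obtain ⟨hk0, hlast⟩ := eq_zero_and_succ_eq_of_sigmaRel_r (by dsimp only; omega) himage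
  dsimp only at hk0 hlast
  omega

/-- The `sigmaRel n` for `n ≥ 3` form an infinite antichain under consecutive
embedding; hence the poset of finite equivalence relations on linearly ordered
sets under consecutive embedding is not well quasi-ordered. -/
theorem sigmaRel_antichain_and_not_wqo :
    (∀ m n : ℕ, 3 ≤ m → 3 ≤ n → m ≠ n →
      ¬ ConsLE ⟨m, sigmaRel m⟩ ⟨n, sigmaRel n⟩) ∧
    ¬ ∀ f : ℕ → EqRel, ∃ i j, i < j ∧ ConsLE (f i) (f j) := by
  refine ⟨fun m n hm _ hmn => not_consLE_sigmaRel (by omega) hmn, fun hwqo => ?_⟩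
  obtain ⟨i, j, hij, hle⟩ := hwqo fun i => ⟨i + 3, sigmaRel (i + 3)⟩
  exact not_consLE_sigmaRel (by omega) (by omega) hle
end

section
/- For k-coloured equivalence relations on linearly ordered finite sets: two coloured equivalence relations whose underlying sets are intervals of ℕ satisfy σ^{c1} ≤_col ρ^{c2} if and only if the window-path Π'(σ^{c1}) is a subpath of Π'(ρ^{c2}) in the coloured factor graph; in particular, each path in the coloured factor graph has exactly one associated coloured equivalence relation. -/
/-- A `k`-coloured equivalence relation on `{0,...,n-1}` is encoded by its colouring
function `c : Fin n → Fin k`: the equivalence classes are the fibres of `c`, and the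
(injective) colouring assigns to each class its common colour.  The coloured
consecutive embedding order: there is a contiguous (interval) embedding matching
colours exactly. -/
def ColConsLE {n m k : ℕ} (c₁ : Fin n → Fin k) (c₂ : Fin m → Fin k) : Prop :=
  ∃ d, d + n ≤ m ∧ ∀ (x : Fin n) (hx : d + x.1 < m), c₁ x = c₂ ⟨d + x.1, hx⟩

/-- The length-`b` coloured window of `c` starting at position `i`. -/
def cwindow {n k : ℕ} (c : Fin n → Fin k) (b i : ℕ) (h : i + b ≤ n) : Fin b → Fin k :=
  fun x => c ⟨i + x.1, by have := x.isLt; omega⟩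

/-- The window path `Π'(c)`: the sequence of all length-`b` coloured windows. -/
def cwindows {n k : ℕ} (c : Fin n → Fin k) (b : ℕ) (h : b ≤ n) : List (Fin b → Fin k) :=
  List.ofFn fun i : Fin (n - b + 1) => cwindow c b i.1 (by have := i.isLt; omega)

/-!
Every position `x < n` lies in some length-`b` window (take the window starting at
`min x (n - b)`, which needs `0 < b ≤ n`), so two colourings agree at offset `d` exactly when
their windows agree at offset `d`. Infixes of lists are exactly agreements at an offset, and
the window path of a length-`n` colouring has `n - b + 1` entries, so the offsets allowed on
both sides correspond. Uniqueness is the case of equal lengths, where the only offset is `0`.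
-/

variable {k b n m : ℕ}

@[simp]
lemma length_cwindows (c : Fin n → Fin k) (h : b ≤ n) : (cwindows c b h).length = n - b + 1 := by
  simp [cwindows]

lemma getElem_cwindows (c : Fin n → Fin k) (h : b ≤ n) {i : ℕ} (hi : i + b ≤ n) :
    (cwindows c b h)[i]'(by simp; omega) = cwindow c b i hi := by
  simp only [cwindows, List.getElem_ofFn]

lemma getElem?_cwindows (c : Fin n → Fin k) (h : b ≤ n) {i : ℕ} (hi : i + b ≤ n) :
    (cwindows c b h)[i]? = some (cwindow c b i hi) := by
  rw [List.getElem?_eq_getElem (by simp; omega), getElem_cwindows]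

lemma exists_window_mem (hb : 0 < b) (hn : b ≤ n) {x : ℕ} (hx : x < n) :
    ∃ i, i + b ≤ n ∧ i ≤ x ∧ x < i + b :=
  ⟨min x (n - b), by omega, by omega, by omega⟩

lemma cwindow_eq_iff_eq_shift (hb : 0 < b) (hn : b ≤ n) {d : ℕ} (hdm : d + n ≤ m)
    (c₁ : Fin n → Fin k) (c₂ : Fin m → Fin k) :
    (∀ i (hi : i + b ≤ n), cwindow c₁ b i hi = cwindow c₂ b (i + d) (by omega)) ↔
      ∀ (x : Fin n) (hx : d + x.1 < m), c₁ x = c₂ ⟨d + x.1, hx⟩ := by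
  constructor
  · intro hw x hx
    obtain ⟨i, hi, hix, hxi⟩ := exists_window_mem hb hn x.isLt
    have := congrFun (hw i hi) ⟨x - i, by omega⟩
    simp only [cwindow] at this
    convert this using 2 <;> ext <;> simp <;> omega
  · intro hc i hi
    funext y
    exact (hc ⟨i + y, by omega⟩ (by omega)).trans (congrArg c₂ (Fin.ext (by simp; omega)))

lemma colConsLE_iff_isInfix_cwindows (hb : 0 < b) (hn : b ≤ n) (hm : b ≤ m)
    (c₁ : Fin n → Fin k) (c₂ : Fin m → Fin k) :
    ColConsLE c₁ c₂ ↔ cwindows c₁ b hn <:+: cwindows c₂ b hm := by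
  rw [ColConsLE, List.infix_iff_getElem?]
  simp only [length_cwindows]
  refine exists_congr fun d => ⟨fun ⟨hdm, hc⟩ => ⟨by omega, fun i hi => ?_⟩,
    fun ⟨hdm, hw⟩ => ⟨by omega, (cwindow_eq_iff_eq_shift hb hn (by omega) c₁ c₂).1 ?_⟩⟩
  · rw [getElem?_cwindows c₂ hm (by omega), getElem_cwindows c₁ hn (by omega)]
    exact congrArg some ((cwindow_eq_iff_eq_shift hb hn hdm c₁ c₂).2 hc i _).symm
  · intro i hi
    have hwi := hw i (by omega)
    rw [getElem?_cwindows c₂ hm (by omega), getElem_cwindows c₁ hn hi] at hwi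
    exact (Option.some_inj.1 hwi).symm

lemma ColConsLE.eq {c₁ c₂ : Fin n → Fin k} (h : ColConsLE c₁ c₂) : c₁ = c₂ := by
  obtain ⟨d, hd, hc⟩ := h
  obtain rfl : d = 0 := by omega
  funext x
  simpa using hc x (by simp)

/-- For coloured equivalence relations of length at least `b`:
`σ^{c₁} ≤_col ρ^{c₂}` iff the window path of `c₁` is a subpath of the window path
of `c₂`; in particular each window path is associated with exactly one coloured
equivalence relation. -/
theorem colConsLE_iff_windows_isInfix {k b n m : ℕ} (hb : 0 < b)
    (hn : b ≤ n) (hm : b ≤ m) (c₁ : Fin n → Fin k) (c₂ : Fin m → Fin k) :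
    (ColConsLE c₁ c₂ ↔ cwindows c₁ b hn <:+: cwindows c₂ b hm) ∧
      (∀ c₁' : Fin n → Fin k, cwindows c₁' b hn = cwindows c₁ b hn → c₁' = c₁) :=
  ⟨colConsLE_iff_isInfix_cwindows hb hn hm c₁ c₂, fun c₁' hw =>
    ((colConsLE_iff_isInfix_cwindows hb hn hn c₁' c₁).2 (hw ▸ List.infix_refl _)).eq⟩
end

section
/- The avoidance set Av(|1 2 3|4 5 6|) — all finite equivalence relations not embedding an equivalence relation with two classes of size 3 — is atomic under the (non-consecutive) embedding order: for any two members σ, ρ there is a member θ embedding both. -/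
/-- The equivalence relation on a 6-element set with two classes of size 3:
`|1 2 3|4 5 6|`. -/
def twoTriples : Setoid (Fin 6) where
  r a b := a.1 / 3 = b.1 / 3
  iseqv := ⟨fun _ => rfl, Eq.symm, Eq.trans⟩

/-!
An equivalence relation avoids `|1 2 3|4 5 6|` exactly when any two elements lying in classes of
size at least three are related, i.e. it has at most one such large class. Given two members,
take their disjoint union and merge its (at most two) large classes into one. The result has at
most one large class, and since each summand had at most one, the merge does not change the
relation on either summand, so both embed.
-/

open Function

namespace Setoid

variable {α β : Type*}

def InLargeClass (r : Setoid α) (x : α) : Prop :=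
  ∃ a b c, a ≠ b ∧ a ≠ c ∧ b ≠ c ∧ r x a ∧ r x b ∧ r x c

def AtMostOneLargeClass (r : Setoid α) : Prop :=
  ∀ x y, r.InLargeClass x → r.InLargeClass y → r x y

theorem InLargeClass.of_rel {r : Setoid α} {x y : α} (hxy : r x y) (hx : r.InLargeClass x) :
    r.InLargeClass y := by
  obtain ⟨a, b, c, hab, hac, hbc, ha, hb, hc⟩ := hx
  exact ⟨a, b, c, hab, hac, hbc, r.trans (r.symm hxy) ha, r.trans (r.symm hxy) hb,
    r.trans (r.symm hxy) hc⟩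

theorem InLargeClass.map {r : Setoid α} {s : Setoid β} {f : α → β} (hf : Injective f)
    (hrs : ∀ x y, r x y → s (f x) (f y)) {x : α} (hx : r.InLargeClass x) :
    s.InLargeClass (f x) := by
  obtain ⟨a, b, c, hab, hac, hbc, ha, hb, hc⟩ := hx
  exact ⟨f a, f b, f c, hf.ne hab, hf.ne hac, hf.ne hbc, hrs _ _ ha, hrs _ _ hb, hrs _ _ hc⟩

theorem InLargeClass.of_map {r : Setoid α} {s : Setoid β} {f : α → β}
    (hsr : ∀ x y, s (f x) (f y) → r x y) (hrange : ∀ x y, s (f x) y → ∃ a, y = f a) {x : α}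
    (hx : s.InLargeClass (f x)) : r.InLargeClass x := by
  obtain ⟨_, _, _, hab, hac, hbc, ha, hb, hc⟩ := hx
  obtain ⟨a, rfl⟩ := hrange _ _ ha
  obtain ⟨b, rfl⟩ := hrange _ _ hb
  obtain ⟨c, rfl⟩ := hrange _ _ hc
  exact ⟨a, b, c, ne_of_apply_ne f hab, ne_of_apply_ne f hac, ne_of_apply_ne f hbc,
    hsr _ _ ha, hsr _ _ hb, hsr _ _ hc⟩

theorem AtMostOneLargeClass.comap {r : Setoid β} (hr : r.AtMostOneLargeClass) {f : α → β}
    (hf : Injective f) : (r.comap f).AtMostOneLargeClass := fun _ _ hx hy =>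
  hr _ _ (hx.map hf fun _ _ h => h) (hy.map hf fun _ _ h => h)

def sum (r : Setoid α) (s : Setoid β) : Setoid (α ⊕ β) where
  r := Sum.LiftRel r s
  iseqv := by
    refine ⟨Sum.LiftRel.refl _ _, fun h => ?_, Sum.LiftRel.trans _ _⟩
    cases h with
    | inl h => exact .inl (r.symm h)
    | inr h => exact .inr (s.symm h)

theorem InLargeClass.of_sum_inl {r : Setoid α} {s : Setoid β} {x : α}
    (hx : (r.sum s).InLargeClass (.inl x)) : r.InLargeClass x :=
  hx.of_map (fun _ _ => Sum.liftRel_inl_inl.1) fun _ _ h =>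
    Sum.isLeft_iff.1 (Sum.LiftRel.isLeft_right h)

theorem InLargeClass.of_sum_inr {r : Setoid α} {s : Setoid β} {x : β}
    (hx : (r.sum s).InLargeClass (.inr x)) : s.InLargeClass x :=
  hx.of_map (fun _ _ => Sum.liftRel_inr_inr.1) fun _ _ h =>
    Sum.isRight_iff.1 (Sum.LiftRel.isRight_right h)

def mergeLarge (r : Setoid α) : Setoid α where
  r x y := r x y ∨ r.InLargeClass x ∧ r.InLargeClass y
  iseqv := by
    refine ⟨fun x => .inl (r.refl x), ?_, ?_⟩
    · rintro x y (h | ⟨hx, hy⟩)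
      exacts [.inl (r.symm h), .inr ⟨hy, hx⟩]
    · rintro x y z (h | ⟨hx, hy⟩) (h' | ⟨hy', hz⟩)
      · exact .inl (r.trans h h')
      · exact .inr ⟨hy'.of_rel (r.symm h), hz⟩
      · exact .inr ⟨hx, hy.of_rel h'⟩
      · exact .inr ⟨hx, hz⟩

theorem mergeLarge_rel_iff {r : Setoid α} {x y : α}
    (h : r.InLargeClass x → r.InLargeClass y → r x y) : r.mergeLarge x y ↔ r x y :=
  ⟨fun h' => h'.elim id fun ⟨hx, hy⟩ => h hx hy, .inl⟩

theorem atMostOneLargeClass_mergeLarge (r : Setoid α) : r.mergeLarge.AtMostOneLargeClass := by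
  have large : ∀ x, r.mergeLarge.InLargeClass x → r.InLargeClass x := by
    intro x hx
    by_contra hx'
    have hrel : ∀ {y}, r.mergeLarge x y → r x y := (mergeLarge_rel_iff (absurd · hx')).1
    obtain ⟨a, b, c, hab, hac, hbc, ha, hb, hc⟩ := hx
    exact hx' ⟨a, b, c, hab, hac, hbc, hrel ha, hrel hb, hrel hc⟩
  exact fun x y hx hy => .inr ⟨large x hx, large y hy⟩

theorem mergeLarge_sum_inl_iff {r : Setoid α} {s : Setoid β} (hr : r.AtMostOneLargeClass)
    {x y : α} : (r.sum s).mergeLarge (.inl x) (.inl y) ↔ r x y :=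
  (mergeLarge_rel_iff fun hx hy => Sum.LiftRel.inl (hr _ _ hx.of_sum_inl hy.of_sum_inl)).trans
    Sum.liftRel_inl_inl

theorem mergeLarge_sum_inr_iff {r : Setoid α} {s : Setoid β} (hs : s.AtMostOneLargeClass)
    {x y : β} : (r.sum s).mergeLarge (.inr x) (.inr y) ↔ s x y :=
  (mergeLarge_rel_iff fun hx hy => Sum.LiftRel.inr (hs _ _ hx.of_sum_inr hy.of_sum_inr)).trans
    Sum.liftRel_inr_inr

end Setoid

theorem twoTriples_rel_iff {i j : Fin 6} : twoTriples i j ↔ i.1 / 3 = j.1 / 3 := Iff.rfl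

theorem embedLE_twoTriples_iff {n : ℕ} (τ : Setoid (Fin n)) :
    EmbedLE ⟨6, twoTriples⟩ ⟨n, τ⟩ ↔ ¬ τ.AtMostOneLargeClass := by
  constructor
  · rintro ⟨f, hf, hrel⟩ hτ
    have large : ∀ i : Fin 6, twoTriples.InLargeClass i → τ.InLargeClass (f i) :=
      fun i => Setoid.InLargeClass.map hf fun i j => (hrel i j).1
    have h03 := (hrel 0 3).2 (hτ _ _
      (large 0 ⟨0, 1, 2, by decide, by decide, by decide, rfl, rfl, rfl⟩)
      (large 3 ⟨3, 4, 5, by decide, by decide, by decide, rfl, rfl, rfl⟩))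
    exact absurd (twoTriples_rel_iff.1 h03) (by decide)
  · intro hτ
    simp only [Setoid.AtMostOneLargeClass, not_forall] at hτ
    obtain ⟨x, y, ⟨a₀, a₁, a₂, h01, h02, h12, ha₀, ha₁, ha₂⟩,
      ⟨b₀, b₁, b₂, h01', h02', h12', hb₀, hb₁, hb₂⟩, hxy⟩ := hτ
    -- in the quotient, both goals are equational reasoning about the six points
    simp only [← Quotient.eq_iff_equiv] at *
    refine ⟨![a₀, a₁, a₂, b₀, b₁, b₂], fun i j hij => ?_, fun i j => ?_⟩
    · fin_cases i <;> fin_cases j <;> simp at hij ⊢ <;> grind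
    · change twoTriples i j ↔ τ _ _
      refine twoTriples_rel_iff.trans (Iff.trans ?_ Quotient.eq_iff_equiv)
      fin_cases i <;> fin_cases j <;> simp <;> grind

theorem mem_av_twoTriples_iff {n : ℕ} (τ : Setoid (Fin n)) :
    (⟨n, τ⟩ : EqRel) ∈ Av {⟨6, twoTriples⟩} ↔ τ.AtMostOneLargeClass :=
  (⟨fun h => h _ rfl, fun h _ hβ => hβ ▸ h⟩ : _ ↔ ¬ EmbedLE _ _).trans
    ((not_congr (embedLE_twoTriples_iff τ)).trans not_not)

theorem embedLE_comap_symm {α : Type*} {n k : ℕ} {σ : Setoid (Fin n)} {τ : Setoid α}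
    (e : α ≃ Fin k) {f : Fin n → α} (hf : Injective f) (h : ∀ x y, τ (f x) (f y) ↔ σ x y) :
    EmbedLE ⟨n, σ⟩ ⟨k, τ.comap e.symm⟩ :=
  ⟨e ∘ f, e.injective.comp hf, fun x y => by simpa [Setoid.comap_rel] using (h x y).symm⟩

/-- `Av(|1 2 3|4 5 6|)` is atomic: it has the joint embedding property. -/
theorem av_twoTriples_atomic :
    ∀ σ ∈ Av {(⟨6, twoTriples⟩ : EqRel)}, ∀ ρ ∈ Av {(⟨6, twoTriples⟩ : EqRel)},
      ∃ θ ∈ Av {(⟨6, twoTriples⟩ : EqRel)}, EmbedLE σ θ ∧ EmbedLE ρ θ := by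
  rintro ⟨n, σ⟩ hσ ⟨m, ρ⟩ hρ
  replace hσ := (mem_av_twoTriples_iff σ).1 hσ
  replace hρ := (mem_av_twoTriples_iff ρ).1 hρ
  let θ := (σ.sum ρ).mergeLarge.comap finSumFinEquiv.symm
  refine ⟨⟨n + m, θ⟩, ?_, ?_, ?_⟩
  · exact (mem_av_twoTriples_iff θ).2
      ((Setoid.atMostOneLargeClass_mergeLarge _).comap finSumFinEquiv.symm.injective)
  · exact embedLE_comap_symm _ Sum.inl_injective fun _ _ => Setoid.mergeLarge_sum_inl_iff hσ
  · exact embedLE_comap_symm _ Sum.inr_injective fun _ _ => Setoid.mergeLarge_sum_inr_iff hρ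
end

section
/- Every equivalence relation σ whose class-size sequence in decreasing order is (a_1,...,a_k), and every equivalence relation ρ with decreasing class-size sequence (b_1,...,b_l) with l ≤ k, both embed into the equivalence relation γ with decreasing class-size sequence (c_1,...,c_k) where c_i = max(a_i, b_i) for i ≤ l and c_i = a_i for i > l. Moreover, if θ is a uniform equivalence relation (all classes the same size) that embeds into γ, then θ embeds into σ or into ρ. -/
/-- The sequence of class sizes of `ρ` in weakly decreasing order. -/
noncomputable def piSeq {X : Type*} [Fintype X] (ρ : Setoid X) : List ℕ :=
  (Multiset.sort ((Setoid.classes ρ).toFinite.toFinset.val.map Set.ncard) (· ≤ ·)).reverse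

/-!
Label each class of an equivalence relation by the position of its size in the class-size
sequence. An embedding is then the same thing as an injection of labels that does not decrease
class sizes: glue embeddings of the fibres in one direction, and push classes forward along the
embedding in the other. With the identity on labels this gives `σ, ρ ≤ γ`. If `θ` is uniform of
class size `m` and embeds into `γ`, the first `|θ|` entries of the decreasing sequence of `γ` are
at least `m`, i.e. `max(a_i, b_i) ≥ m` for `i < |θ|`; since `a` and `b` are both decreasing, one
of them is `≥ m` at all these indices, and `θ` embeds into `σ` or into `ρ`.
-/

open Function

theorem Multiset.exists_coe_eq_and_map_eq {α β : Type*} {s : Multiset α} {f : α → β}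
    {L : List β} (h : s.map f = L) : ∃ l : List α, (l : Multiset α) = s ∧ l.map f = L := by
  induction L generalizing s with
  | nil => exact ⟨[], (Multiset.map_eq_zero.1 h).symm, rfl⟩
  | cons b L ih =>
    obtain ⟨a, ha, rfl⟩ := Multiset.mem_map.1 (h ▸ List.mem_cons_self : b ∈ s.map f)
    obtain ⟨s, rfl⟩ := Multiset.exists_cons_of_mem ha
    obtain ⟨l, rfl, hl⟩ := ih (Multiset.cons_inj_right (f a) |>.1 (by simpa using h))
    exact ⟨a :: l, rfl, by simp [hl]⟩

theorem Finset.exists_equiv_fin_of_coe_eq_map {α β : Type*} {s : Finset α} {f : α → β}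
    {L : List β} (h : (L : Multiset β) = s.val.map f) :
    ∃ e : Fin L.length ≃ s, ∀ i, f (e i) = L[i] := by
  classical
  obtain ⟨l, hl, rfl⟩ := Multiset.exists_coe_eq_and_map_eq h.symm
  have hnodup : l.Nodup := by rw [← Multiset.coe_nodup, hl]; exact s.nodup
  have hmem : ∀ a, a ∈ l ↔ a ∈ s := fun a => by rw [← Multiset.mem_coe, hl]; rfl
  refine ⟨(finCongr (List.length_map f)).trans
    ((hnodup.getEquiv).trans (Equiv.subtypeEquivRight hmem)), fun i => ?_⟩
  simp

theorem exists_embedding_of_card_fiber_le {X Y ι κ : Type*} [Finite X] [Finite Y]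
    (π : X → ι) (τ : Y → κ) (g : ι ↪ κ)
    (h : ∀ i, Nat.card {x // π x = i} ≤ Nat.card {y // τ y = g i}) :
    ∃ f : X ↪ Y, ∀ x, τ (f x) = g (π x) := by
  classical
  have := Fintype.ofFinite X
  have := Fintype.ofFinite Y
  have e i : {x // π x = i} ↪ {y // τ y = g i} :=
    (Embedding.nonempty_of_card_le (by simpa only [Nat.card_eq_fintype_card] using h i)).some
  refine ⟨(Equiv.sigmaFiberEquiv π).symm.toEmbedding.trans
    ((Embedding.sigmaMap g e).trans (Equiv.sigmaFiberEquiv τ).toEmbedding), fun x => ?_⟩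
  exact (e (π x) ⟨x, rfl⟩).2

theorem exists_embedding_card_fiber_le_of_injective {X Y ι κ : Type*} [Finite Y]
    {π : X → ι} (hπ : Surjective π) (τ : Y → κ) {f : X → Y} (hf : Injective f)
    (hfπ : ∀ x y, π x = π y ↔ τ (f x) = τ (f y)) :
    ∃ g : ι ↪ κ, ∀ i, Nat.card {x // π x = i} ≤ Nat.card {y // τ y = g i} := by
  have hinv : ∀ x, τ (f (surjInv hπ (π x))) = τ (f x) :=
    fun x => (hfπ _ _).1 (surjInv_eq hπ _)
  refine ⟨⟨τ ∘ f ∘ surjInv hπ, fun i j hij => ?_⟩, fun i => ?_⟩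
  · simpa only [surjInv_eq] using (hfπ _ _).2 hij
  · refine Nat.card_le_card_of_injective
      (fun x => ⟨f x, by obtain ⟨x, rfl⟩ := x; exact (hinv x).symm⟩) fun x y hxy => ?_
    exact Subtype.ext (hf (congrArg Subtype.val hxy))

theorem List.SortedGE.antitone_getD {l : List ℕ} (h : l.SortedGE) : Antitone (l.getD · 0) := by
  intro i j hij
  show l.getD j 0 ≤ l.getD i 0
  rcases lt_or_ge j l.length with hj | hj
  · rw [List.getD_eq_getElem _ _ hj, List.getD_eq_getElem _ _ (hij.trans_lt hj)]
    exact h.getElem_ge_getElem_of_le hij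
  · rw [List.getD_eq_default _ _ hj]
    exact Nat.zero_le _

theorem List.getD_ofFn_max_getD {l l' : List ℕ} (h : l'.length ≤ l.length) (i : ℕ) :
    (List.ofFn fun j : Fin l.length => max (l.get j) (l'.getD j 0)).getD i 0
      = max (l.getD i 0) (l'.getD i 0) := by
  rcases lt_or_ge i l.length with hi | hi
  · rw [List.getD_eq_getElem _ _ (by simpa using hi), List.getElem_ofFn,
      List.getD_eq_getElem _ _ hi]
    rfl
  · rw [List.getD_eq_default _ _ (by simpa using hi), List.getD_eq_default _ _ hi,
      List.getD_eq_default _ _ (h.trans hi), max_self]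

theorem forall_le_or_forall_le_of_le_max {α : Type*} [LinearOrder α] {a b : ℕ → α}
    (ha : Antitone a) (hb : Antitone b) {m : α} {t : ℕ} (h : ∀ i < t, m ≤ max (a i) (b i)) :
    (∀ i < t, m ≤ a i) ∨ (∀ i < t, m ≤ b i) := by
  by_contra! ⟨⟨i, hi, hai⟩, ⟨j, hj, hbj⟩⟩
  refine (h (max i j) (max_lt hi hj)).not_gt (max_lt ?_ ?_)
  · exact (ha (le_max_left i j)).trans_lt hai
  · exact (hb (le_max_right i j)).trans_lt hbj

theorem Setoid.setOf_rel_eq_iff {X : Type*} (r : Setoid X) {x y : X} :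
    {z | r z x} = {z | r z y} ↔ r x y := by
  refine ⟨fun h => (h ▸ r.refl x : x ∈ {z | r z y}), fun h => Set.ext fun z => ?_⟩
  exact ⟨fun hz => r.trans hz h, fun hz => r.trans hz (r.symm h)⟩

section piSeq

variable {X : Type*} [Fintype X] (r : Setoid X)

theorem coe_piSeq :
    (piSeq r : Multiset ℕ) = r.classes.toFinite.toFinset.val.map Set.ncard := by
  rw [piSeq, Multiset.coe_reverse, Multiset.sort_eq]

theorem piSeq_sortedGE : (piSeq r).SortedGE :=
  (Multiset.pairwise_sort _ _).sortedLE.reverse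

theorem piSeq_getD_antitone : Antitone ((piSeq r).getD · 0) :=
  (piSeq_sortedGE r).antitone_getD

theorem exists_class_of_mem_piSeq {n : ℕ} (h : n ∈ piSeq r) :
    ∃ c ∈ r.classes, c.ncard = n := by
  rw [← Multiset.mem_coe, coe_piSeq, Multiset.mem_map] at h
  obtain ⟨c, hc, rfl⟩ := h
  exact ⟨c, (Set.Finite.mem_toFinset _).1 hc, rfl⟩

theorem Setoid.exists_piSeq_labeling :
    ∃ π : X → Fin (piSeq r).length, Surjective π ∧ (∀ x y, r x y ↔ π x = π y) ∧
      ∀ i, Nat.card {x // π x = i} = (piSeq r)[i] := by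
  obtain ⟨e, he⟩ := Finset.exists_equiv_fin_of_coe_eq_map (coe_piSeq r)
  let cls (x : X) : r.classes.toFinite.toFinset := ⟨{z | r z x}, by simp [Setoid.mem_classes]⟩
  have hcls : ∀ x i, cls x = e i ↔ x ∈ (e i : Set X) := by
    intro x i
    obtain ⟨y, hy⟩ := (Set.Finite.mem_toFinset _).1 (e i).2
    rw [← Subtype.coe_inj, hy]
    exact r.setOf_rel_eq_iff
  refine ⟨fun x => e.symm (cls x), fun i => ?_, fun x y => ?_, fun i => ?_⟩
  · obtain ⟨y, hy⟩ := (Set.Finite.mem_toFinset _).1 (e i).2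
    exact ⟨y, e.symm_apply_eq.2 ((hcls y i).2 (hy ▸ r.refl y))⟩
  · rw [e.symm.apply_eq_iff_eq, ← Subtype.coe_inj]
    exact r.setOf_rel_eq_iff.symm
  · simp_rw [e.symm_apply_eq, hcls]
    rw [← he, Nat.card_coe_set_eq]

theorem piSeq_pos (i : Fin (piSeq r).length) : 0 < (piSeq r)[i] := by
  obtain ⟨π, hπ, -, hcard⟩ := r.exists_piSeq_labeling
  obtain ⟨x, hx⟩ := hπ i
  rw [← hcard]
  exact Nat.card_pos_iff.2 ⟨⟨⟨x, hx⟩⟩, inferInstance⟩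

end piSeq

theorem embedLE_iff (a b : EqRel) : EmbedLE a b ↔
    ∃ φ : Fin (piSeq a.2).length ↪ Fin (piSeq b.2).length,
      ∀ i, (piSeq a.2)[i] ≤ (piSeq b.2)[φ i] := by
  obtain ⟨πa, hπa, hra, hcarda⟩ := a.2.exists_piSeq_labeling
  obtain ⟨πb, -, hrb, hcardb⟩ := b.2.exists_piSeq_labeling
  constructor
  · rintro ⟨f, hf, hfr⟩
    obtain ⟨φ, hφ⟩ := exists_embedding_card_fiber_le_of_injective hπa πb hf
      fun x y => by rw [← hra, ← hrb, hfr]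
    exact ⟨φ, fun i => by simpa only [hcarda, hcardb] using hφ i⟩
  · rintro ⟨φ, hφ⟩
    obtain ⟨f, hf⟩ := exists_embedding_of_card_fiber_le πa πb φ
      fun i => by simpa only [hcarda, hcardb] using hφ i
    exact ⟨f, f.injective, fun x y => by rw [hra, hrb, hf, hf, φ.apply_eq_iff_eq]⟩

theorem embedLE_of_forall_getD_le {a b : EqRel}
    (h : ∀ i < (piSeq a.2).length, (piSeq a.2).getD i 0 ≤ (piSeq b.2).getD i 0) :
    EmbedLE a b := by
  have hlen : (piSeq a.2).length ≤ (piSeq b.2).length := by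
    by_contra! hlt
    have hle := h _ hlt
    rw [List.getD_eq_getElem _ _ hlt, List.getD_eq_default _ _ le_rfl] at hle
    exact (piSeq_pos a.2 ⟨_, hlt⟩).not_ge hle
  refine (embedLE_iff a b).2 ⟨Fin.castLEEmb hlen, fun i => ?_⟩
  have hi := h i i.2
  rwa [List.getD_eq_getElem _ _ i.2, List.getD_eq_getElem _ _ (i.2.trans_le hlen)] at hi

theorem le_getD_of_embedLE {θ γ : EqRel} {m : ℕ} (hE : EmbedLE θ γ)
    (hm : ∀ n ∈ piSeq θ.2, m ≤ n) : ∀ i < (piSeq θ.2).length, m ≤ (piSeq γ.2).getD i 0 := by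
  obtain ⟨φ, hφ⟩ := (embedLE_iff θ γ).1 hE
  intro i hi
  by_contra! hlt
  -- the sequence of `γ` decreases, so every label `φ k` would lie below `i < |θ|`
  have hφi : ∀ k, (φ k : ℕ) < i := fun k => (piSeq_getD_antitone γ.2).reflect_lt <| by
    simpa [List.getD_eq_getElem] using hlt.trans_le ((hm _ (List.getElem_mem _)).trans (hφ k))
  have := Fintype.card_le_of_injective (fun k => (⟨φ k, hφi k⟩ : Fin i))
    fun k l hkl => φ.injective (Fin.ext (by simpa using hkl))
  simp only [Fintype.card_fin] at this
  omega

theorem Uniform.exists_forall_mem_piSeq_eq {θ : EqRel} (h : Uniform θ) :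
    ∃ m, ∀ n ∈ piSeq θ.2, n = m := by
  refine ⟨(piSeq θ.2).headD 0, fun n hn => ?_⟩
  obtain ⟨c, hc, rfl⟩ := exists_class_of_mem_piSeq _ hn
  cases hl : piSeq θ.2 with
  | nil => simp [hl] at hn
  | cons k l =>
    obtain ⟨d, hd, rfl⟩ := exists_class_of_mem_piSeq _ (hl ▸ List.mem_cons_self)
    exact h c hc d hd

/-- If `σ` has decreasing class-size sequence `(a_1,...,a_k)`, `ρ` has decreasing
class-size sequence `(b_1,...,b_l)` with `l ≤ k`, and `γ` has class-size sequence
`(c_1,...,c_k)` with `c_i = max(a_i, b_i)` for `i ≤ l` and `c_i = a_i` for `i > l`,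
then `σ` and `ρ` both embed into `γ`; moreover any uniform equivalence relation
embedding into `γ` embeds into `σ` or into `ρ`. -/
theorem embeds_into_max_and_uniform_splits (σ ρ γ : EqRel)
    (hlen : (piSeq ρ.2).length ≤ (piSeq σ.2).length)
    (hγ : piSeq γ.2 = List.ofFn fun i : Fin (piSeq σ.2).length =>
        max ((piSeq σ.2).get i) ((piSeq ρ.2).getD (i : ℕ) 0)) :
    EmbedLE σ γ ∧ EmbedLE ρ γ ∧
      ∀ θ : EqRel, Uniform θ → EmbedLE θ γ → EmbedLE θ σ ∨ EmbedLE θ ρ := by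
  have hγ' (i : ℕ) : (piSeq γ.2).getD i 0 = max ((piSeq σ.2).getD i 0) ((piSeq ρ.2).getD i 0) :=
    hγ ▸ List.getD_ofFn_max_getD hlen i
  refine ⟨embedLE_of_forall_getD_le fun i _ => hγ' i ▸ le_max_left _ _,
    embedLE_of_forall_getD_le fun i _ => hγ' i ▸ le_max_right _ _, fun θ hθ hθγ => ?_⟩
  obtain ⟨m, hm⟩ := hθ.exists_forall_mem_piSeq_eq
  have hθm (i : ℕ) (hi : i < (piSeq θ.2).length) : (piSeq θ.2).getD i 0 = m := by
    rw [List.getD_eq_getElem _ _ hi]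
    exact hm _ (List.getElem_mem hi)
  have hγm := le_getD_of_embedLE hθγ fun n hn => (hm n hn).ge
  rcases forall_le_or_forall_le_of_le_max (piSeq_getD_antitone σ.2) (piSeq_getD_antitone ρ.2)
    (fun i hi => hγ' i ▸ hγm i hi) with h | h
  · exact .inl (embedLE_of_forall_getD_le fun i hi => (hθm i hi).trans_le (h i hi))
  · exact .inr (embedLE_of_forall_getD_le fun i hi => (hθm i hi).trans_le (h i hi))
end
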